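/- arXiv:2501.13513 — 2 statements merged into one kernel-verified Lean document; each statement's English description precedes it below -/
import Mathlib

section
/- Let ρ : 𝕋 → ℝ satisfy √ρ ∈ H¹(𝕋), ∫_𝕋 ρ = 1, and ρ(x) > 0 for all x. Define v = Δ√ρ/√ρ ∈ H⁻¹(𝕋) by v(φ) = −∫_𝕋 ∇√ρ · ∇(φ/√ρ) dx. Then v is a well-defined continuous linear functional on H¹(𝕋), and √ρ is an eigenfunction of h(v) = −Δ + v with eigenvalue 0, i.e., ∫_𝕋 ∇√ρ·∇ψ dx + v(√ρ ψ) = 0 for all ψ ∈ H¹(𝕋). -/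
open MeasureTheory Set Filter ComplexConjugate

noncomputable section

/-- Lebesgue measure on one period, modelling the torus `𝕋 = ℝ/(2πℤ)`. -/
def torusMeasure : Measure ℝ := volume.restrict (Set.Ioc 0 (2 * Real.pi))

/-- `φ` is an `H¹(𝕋)` function (continuous representative) with weak derivative `g`:
both are `2π`-periodic, `g ∈ L²`, and `φ` is the primitive of `g`. -/
def IsH1 (φ g : ℝ → ℂ) : Prop :=
  Function.Periodic φ (2 * Real.pi) ∧ Function.Periodic g (2 * Real.pi) ∧
    MeasureTheory.MemLp g 2 torusMeasure ∧
    ∀ x : ℝ, φ x = φ 0 + ∫ t in (0:ℝ)..x, g t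

def L2norm (f : ℝ → ℂ) : ℝ := Real.sqrt (∫ t, ‖f t‖ ^ 2 ∂torusMeasure)

def H1norm (φ g : ℝ → ℂ) : ℝ := Real.sqrt (L2norm φ ^ 2 + L2norm g ^ 2)

def IsH1R (f g : ℝ → ℝ) : Prop := IsH1 (fun x => (f x : ℂ)) (fun x => (g x : ℂ))

def H1normR (f g : ℝ → ℝ) : ℝ := H1norm (fun x => (f x : ℂ)) (fun x => (g x : ℂ))

def L2inner (f h : ℝ → ℂ) : ℂ := ∫ t, conj (f t) * h t ∂torusMeasure

/-- An element of `H⁻¹(𝕋)`: a bounded linear functional on `H¹(𝕋)`. -/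
structure Hneg1 where
  toFun : (ℝ → ℂ) → ℂ
  map_add' : ∀ φ gφ ψ gψ, IsH1 φ gφ → IsH1 ψ gψ → toFun (φ + ψ) = toFun φ + toFun ψ
  map_smul' : ∀ (c : ℂ) φ g, IsH1 φ g → toFun (c • φ) = c * toFun φ
  bound' : ∃ C : ℝ, ∀ φ g, IsH1 φ g → ‖toFun φ‖ ≤ C * H1norm φ g

/-- The `H⁻¹` (dual) norm. -/
def dualNorm (v : Hneg1) : ℝ :=
  sInf {C : ℝ | 0 ≤ C ∧ ∀ φ g, IsH1 φ g → ‖v.toFun φ‖ ≤ C * H1norm φ g}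

/-- `v` is a real potential: it takes real values on real-valued `H¹` functions. -/
def IsRealPotential (v : Hneg1) : Prop :=
  ∀ φ g, IsH1 φ g → (∀ x, (φ x).im = 0) → (v.toFun φ).im = 0

/-- `φ` (with weak derivative `g`) is an eigenfunction of `h(v) = -Δ + v`
with eigenvalue `lam`, in the weak (form) sense. -/
def IsEigenpair (v : Hneg1) (lam : ℝ) (φ g : ℝ → ℂ) : Prop :=
  IsH1 φ g ∧ (∃ x, φ x ≠ 0) ∧
    ∀ ψ h, IsH1 ψ h →
      (∫ t, conj (g t) * h t ∂torusMeasure) + v.toFun (fun x => conj (φ x) * ψ x)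
        = lam * L2inner φ ψ

/-- Ground state: eigenpair with minimal eigenvalue. -/
def IsGroundPair (v : Hneg1) (lam : ℝ) (φ g : ℝ → ℂ) : Prop :=
  IsEigenpair v lam φ g ∧ ∀ μ ψ h, IsEigenpair v μ ψ h → lam ≤ μ

/-- The Kohn–Sham potential `v = Δ√ρ/√ρ`: `v(φ) = -∫ ∇s · ∇(φ/s)` where `s = √ρ`
has weak derivative `ds`; written out using `∇(φ/s) = gφ/s - φ·ds/s²`. -/
def KSpot (s ds : ℝ → ℝ) (φ gφ : ℝ → ℂ) : ℂ :=
  -∫ t, (ds t : ℂ) * (gφ t / (s t : ℂ) - φ t * (ds t : ℂ) / ((s t : ℂ)) ^ 2) ∂torusMeasure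

lemma twopi_pos : (0:ℝ) < 2 * Real.pi := by positivity

instance : IsFiniteMeasure torusMeasure := by
  constructor
  rw [torusMeasure, Measure.restrict_apply_univ]
  simp [Real.volume_Ioc]
  exact ENNReal.mul_lt_top (by norm_num) ENNReal.ofReal_lt_top

lemma torus_univ : (torusMeasure Set.univ).toReal = 2 * Real.pi := by
  rw [torusMeasure, Measure.restrict_apply_univ, Real.volume_Ioc, sub_zero,
    ENNReal.toReal_ofReal twopi_pos.le]

lemma isH1_iff {φ g : ℝ → ℂ} : IsH1 φ g ↔
    (Function.Periodic φ (2 * Real.pi) ∧ Function.Periodic g (2 * Real.pi) ∧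
    MeasureTheory.MemLp g 2 torusMeasure ∧
    ∀ x : ℝ, φ x = φ 0 + ∫ t in (0:ℝ)..x, g t) := Iff.rfl

lemma periodic_intervalIntegrable {f : ℝ → ℂ} {T : ℝ} (hT : 0 < T)
    (hp : Function.Periodic f T) (h : IntervalIntegrable f volume 0 T) :
    ∀ a b : ℝ, IntervalIntegrable f volume a b := by
  have key : ∀ k : ℤ, IntervalIntegrable f volume ((k:ℝ) * T) ((k:ℝ) * T + T) := by
    intro k
    have h2 := h.comp_add_right (-((k:ℝ) * T))
    have he : (fun x => f (x + -((k:ℝ) * T))) = f := funext fun x => by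
      have h3 := (hp.int_mul (-k)) x
      push_cast at h3
      simpa [neg_mul] using h3
    rw [he] at h2
    rw [show (0:ℝ) - -((k:ℝ)*T) = (k:ℝ)*T by ring,
      show T - -((k:ℝ)*T) = (k:ℝ)*T + T by ring] at h2
    exact h2
  have step : ∀ n : ℕ, IntervalIntegrable f volume (-((n:ℝ) * T)) ((n:ℝ) * T + T) := by
    intro n
    induction n with
    | zero => simpa using key 0
    | succ n ih =>
      have l := key (-(n+1))
      have r := key (n+1)
      have l' : IntervalIntegrable f volume (-(((n:ℝ)+1) * T)) (-((n:ℝ) * T)) := by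
        have e1 : (((-(n+1) : ℤ)):ℝ) * T = -(((n:ℝ)+1) * T) := by push_cast; ring
        have e2 : (((-(n+1) : ℤ)):ℝ) * T + T = -((n:ℝ) * T) := by push_cast; ring
        rwa [e2, e1] at l
      have r' : IntervalIntegrable f volume ((n:ℝ) * T + T) ((((n:ℝ)+1)) * T + T) := by
        have e1 : (((n+1 : ℤ)):ℝ) * T = (n:ℝ) * T + T := by push_cast; ring
        have e2 : (((n+1 : ℤ)):ℝ) * T + T = ((n:ℝ)+1) * T + T := by push_cast; ring
        rwa [e2, e1] at r
      have h3 := (l'.trans (ih.trans r'))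
      have e1 : ((n+1:ℕ):ℝ) = (n:ℝ) + 1 := by push_cast; ring
      rw [e1]; exact h3
  intro a b
  obtain ⟨n, hn⟩ := exists_nat_ge (max |a| |b| / T)
  have hmax : max |a| |b| ≤ (n:ℝ) * T := by
    rw [div_le_iff₀ hT] at hn; linarith
  have hnT : (0:ℝ) ≤ (n:ℝ) * T := by positivity
  have hle : (-((n:ℝ)*T)) ≤ (n:ℝ)*T + T := by linarith
  have hmem : ∀ x : ℝ, |x| ≤ max |a| |b| → x ∈ Set.uIcc (-((n:ℝ)*T)) ((n:ℝ)*T + T) := by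
    intro x hx
    rw [Set.uIcc_of_le hle]
    have h4 := abs_le.1 (hx.trans hmax)
    exact ⟨by linarith [h4.1], by linarith [h4.2]⟩
  exact (step n).mono_set
    (Set.uIcc_subset_uIcc (hmem a (le_max_left _ _)) (hmem b (le_max_right _ _)))

lemma ae_zero_of_intervalIntegral_zero {f : ℝ → ℂ}
    (hint : ∀ a b : ℝ, IntervalIntegrable f volume a b)
    (h0 : ∀ x : ℝ, ∫ t in (0:ℝ)..x, f t = 0) :
    ∀ᵐ x ∂(volume : Measure ℝ), f x = 0 := by
  have hloc : LocallyIntegrable f volume := by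
    rw [locallyIntegrable_iff]
    intro k hk
    obtain ⟨r, hr⟩ := hk.isBounded.subset_closedBall 0
    have hr' : k ⊆ Metric.closedBall 0 (max r 0) :=
      hr.trans (Metric.closedBall_subset_closedBall (le_max_left _ _))
    have hb : Metric.closedBall (0:ℝ) (max r 0) = Set.Icc (-(max r 0)) (max r 0) := by
      rw [Real.closedBall_eq_Icc, zero_sub, zero_add]
    have h1 : IntegrableOn f (Set.uIcc (-(max r 0)) (max r 0)) volume :=
      (intervalIntegrable_iff').mp (hint _ _)
    rw [Set.uIcc_of_le (neg_le_self (le_max_right r 0))] at h1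
    exact h1.mono_set (by rw [← hb]; exact hr')
  have key := IsUnifLocDoublingMeasure.ae_tendsto_average (μ := (volume : Measure ℝ)) hloc 1
  filter_upwards [key] with x hx
  have h1 : Tendsto (fun δ : ℝ => ⨍ y in Metric.closedBall x δ, f y) (nhdsWithin 0 (Set.Ioi 0)) (nhds (f x)) := by
    refine hx (fun _ => x) id tendsto_id ?_
    filter_upwards [self_mem_nhdsWithin] with δ hδ
    have h6 : (0:ℝ) < δ := hδ
    simp only [id_eq, one_mul]
    exact Metric.mem_closedBall_self h6.le
  have h2 : (fun δ : ℝ => ⨍ y in Metric.closedBall x δ, f y)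
      =ᶠ[nhdsWithin 0 (Set.Ioi 0)] (fun _ => (0:ℂ)) := by
    filter_upwards [self_mem_nhdsWithin] with δ hδ
    have hδ0 : (0:ℝ) < δ := hδ
    have hi : ∫ y in Metric.closedBall x δ, f y = 0 := by
      rw [Real.closedBall_eq_Icc, integral_Icc_eq_integral_Ioc,
        ← intervalIntegral.integral_of_le (by linarith : x - δ ≤ x + δ)]
      have hadd := intervalIntegral.integral_add_adjacent_intervals
        (hint 0 (x-δ)) (hint (x-δ) (x+δ))
      have ha := h0 (x-δ); have hb := h0 (x+δ)
      linear_combination hadd - ha + hb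
    rw [setAverage_eq, hi, smul_zero]
  exact tendsto_nhds_unique (h1.congr' h2) tendsto_const_nhds

lemma rpow_integral_eq (h : ℝ → ℂ) :
    (∫ a, ‖h a‖ ^ (2:ℝ) ∂torusMeasure) ^ ((1:ℝ)/2) = L2norm h := by
  have e : ∫ a, ‖h a‖ ^ (2:ℝ) ∂torusMeasure = ∫ a, ‖h a‖ ^ 2 ∂torusMeasure := by
    apply integral_congr_ae
    filter_upwards with a
    rw [← Real.rpow_natCast ‖h a‖ 2]; norm_num
  rw [e, L2norm, Real.sqrt_eq_rpow]

lemma cs {f g : ℝ → ℂ} (hf : MemLp f 2 torusMeasure) (hg : MemLp g 2 torusMeasure) :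
    ∫ t, ‖f t‖ * ‖g t‖ ∂torusMeasure ≤ L2norm f * L2norm g := by
  have hpq : Real.HolderConjugate 2 2 := Real.HolderConjugate.two_two
  have h := integral_mul_norm_le_Lp_mul_Lq (μ := torusMeasure) hpq
      (by rw [ENNReal.ofReal_ofNat]; exact hf) (by rw [ENNReal.ofReal_ofNat]; exact hg)
  rw [rpow_integral_eq, rpow_integral_eq] at h
  exact h

lemma integrable_norm_mul {f g : ℝ → ℂ} (hf : MemLp f 2 torusMeasure)
    (hg : MemLp g 2 torusMeasure) :
    Integrable (fun t => ‖f t‖ * ‖g t‖) torusMeasure := by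
  have h1 : Integrable (fun t => ‖f t‖ ^ 2) torusMeasure :=
    (memLp_two_iff_integrable_sq_norm hf.1).1 hf
  have h2 : Integrable (fun t => ‖g t‖ ^ 2) torusMeasure :=
    (memLp_two_iff_integrable_sq_norm hg.1).1 hg
  refine (h1.add h2).mono' (hf.1.norm.mul hg.1.norm) ?_
  filter_upwards with t
  simp only [Pi.add_apply]
  rw [Real.norm_of_nonneg (mul_nonneg (norm_nonneg _) (norm_nonneg _))]
  nlinarith [sq_nonneg (‖f t‖ - ‖g t‖), norm_nonneg (f t), norm_nonneg (g t),
    mul_nonneg (norm_nonneg (f t)) (norm_nonneg (g t))]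

lemma L2norm_nonneg (f : ℝ → ℂ) : 0 ≤ L2norm f := Real.sqrt_nonneg _

lemma L2norm_le_H1norm_fst (φ g : ℝ → ℂ) : L2norm φ ≤ H1norm φ g := by
  have h := Real.sqrt_le_sqrt (by nlinarith [sq_nonneg (L2norm g)] :
    L2norm φ ^ 2 ≤ L2norm φ ^ 2 + L2norm g ^ 2)
  rwa [Real.sqrt_sq (L2norm_nonneg φ)] at h

lemma L2norm_le_H1norm_snd (φ g : ℝ → ℂ) : L2norm g ≤ H1norm φ g := by
  have h := Real.sqrt_le_sqrt (by nlinarith [sq_nonneg (L2norm φ)] :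
    L2norm g ^ 2 ≤ L2norm φ ^ 2 + L2norm g ^ 2)
  rwa [Real.sqrt_sq (L2norm_nonneg g)] at h

lemma IsH1.memL2 {φ g : ℝ → ℂ} (h : IsH1 φ g) : MemLp g 2 torusMeasure := h.2.2.1

lemma IsH1.g_integrable {φ g : ℝ → ℂ} (h : IsH1 φ g) : Integrable g torusMeasure :=
  h.memL2.integrable one_le_two

lemma IsH1.g_intervalIntegrable {φ g : ℝ → ℂ} (h : IsH1 φ g) :
    ∀ a b : ℝ, IntervalIntegrable g volume a b := by
  apply periodic_intervalIntegrable twopi_pos h.2.1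
  rw [intervalIntegrable_iff, Set.uIoc_of_le twopi_pos.le]
  exact h.g_integrable

lemma IsH1.cont {φ g : ℝ → ℂ} (h : IsH1 φ g) : Continuous φ := by
  have he : φ = fun x => φ 0 + ∫ t in (0:ℝ)..x, g t := funext h.2.2.2
  rw [he]
  exact continuous_const.add (intervalIntegral.continuous_primitive h.g_intervalIntegrable 0)

lemma IsH1.norm_le {φ g : ℝ → ℂ} (h : IsH1 φ g) (x : ℝ) :
    ‖φ x‖ ≤ (1 / Real.sqrt (2*Real.pi) + Real.sqrt (2*Real.pi)) * H1norm φ g := by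
  have hT : (0:ℝ) < 2 * Real.pi := twopi_pos
  have hsT : 0 < Real.sqrt (2*Real.pi) := Real.sqrt_pos.2 hT
  obtain ⟨y, hy, hymin⟩ := isCompact_Icc.exists_isMinOn
    (Set.nonempty_Icc.2 hT.le) (continuous_norm.comp h.cont).continuousOn
  have hφint : IntegrableOn (fun t => ‖φ t‖^2) (Set.Ioc 0 (2*Real.pi)) volume :=
    ((continuous_norm.comp h.cont).pow 2).integrableOn_Ioc
  have h1 : (2*Real.pi) * ‖φ y‖^2 ≤ ∫ t, ‖φ t‖^2 ∂torusMeasure := by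
    have hle : ∫ _t in Set.Ioc (0:ℝ) (2*Real.pi), (‖φ y‖^2) ∂volume
        ≤ ∫ t in Set.Ioc (0:ℝ) (2*Real.pi), ‖φ t‖^2 ∂volume := by
      refine setIntegral_mono_on (integrableOn_const ?_) hφint measurableSet_Ioc ?_
      · rw [Real.volume_Ioc]; exact ENNReal.ofReal_ne_top
      · intro t ht
        have h2 := hymin (Set.Ioc_subset_Icc_self ht)
        exact pow_le_pow_left₀ (norm_nonneg _) h2 2
    rw [setIntegral_const, smul_eq_mul, Real.volume_real_Ioc, sub_zero,
      max_eq_left hT.le] at hle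
    exact hle
  have hy2 : ‖φ y‖ ≤ L2norm φ / Real.sqrt (2*Real.pi) := by
    have h2 : Real.sqrt ((2*Real.pi) * ‖φ y‖^2) ≤ L2norm φ := Real.sqrt_le_sqrt h1
    rw [Real.sqrt_mul hT.le, Real.sqrt_sq (norm_nonneg _)] at h2
    rw [le_div_iff₀ hsT, mul_comm]
    exact h2
  have hgL1 : ∫ t, ‖g t‖ ∂torusMeasure ≤ Real.sqrt (2*Real.pi) * L2norm g := by
    have hone : MemLp (fun _ : ℝ => (1:ℂ)) 2 torusMeasure := memLp_const 1
    have h2 := cs h.memL2 hone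
    simp only [norm_one, mul_one] at h2
    have hL1 : L2norm (fun _ : ℝ => (1:ℂ)) = Real.sqrt (2*Real.pi) := by
      have h3 : ∫ _t, ‖(1:ℂ)‖^2 ∂torusMeasure = 2*Real.pi := by
        simp only [norm_one, one_pow]
        rw [integral_const, smul_eq_mul, mul_one]; exact torus_univ
      rw [L2norm, h3]
    rw [hL1] at h2
    calc ∫ t, ‖g t‖ ∂torusMeasure ≤ L2norm g * Real.sqrt (2*Real.pi) := h2
      _ = Real.sqrt (2*Real.pi) * L2norm g := mul_comm _ _
  obtain ⟨x', hx', hxe⟩ := h.1.exists_mem_Ico₀ hT x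
  have hx'' : x' ∈ Set.Icc 0 (2*Real.pi) := ⟨hx'.1, hx'.2.le⟩
  have hdiff : ‖φ x' - φ y‖ ≤ Real.sqrt (2*Real.pi) * L2norm g := by
    have heq : φ x' - φ y = ∫ t in y..x', g t := by
      have e1 := h.2.2.2 x'
      have e2 := h.2.2.2 y
      have hadd := intervalIntegral.integral_add_adjacent_intervals
        (h.g_intervalIntegrable 0 y) (h.g_intervalIntegrable y x')
      linear_combination e1 - e2 - hadd
    rw [heq]
    calc ‖∫ t in y..x', g t‖ ≤ ∫ t in Set.uIoc y x', ‖g t‖ ∂volume :=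
          intervalIntegral.norm_integral_le_integral_norm_uIoc
      _ ≤ ∫ t in Set.Ioc 0 (2*Real.pi), ‖g t‖ ∂volume := by
          refine setIntegral_mono_set h.g_integrable.norm
            (Filter.Eventually.of_forall fun t => norm_nonneg _) ?_
          refine HasSubset.Subset.eventuallyLE ?_
          exact Set.Ioc_subset_Ioc (le_min hy.1 hx''.1) (max_le hy.2 hx''.2)
      _ ≤ Real.sqrt (2*Real.pi) * L2norm g := hgL1
  rw [hxe]
  have htri : ‖φ x'‖ ≤ ‖φ y‖ + ‖φ x' - φ y‖ := by
    have h5 := norm_add_le (φ y) (φ x' - φ y)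
    simpa using h5
  have hNg : L2norm g ≤ H1norm φ g := L2norm_le_H1norm_snd φ g
  have hNφ : L2norm φ ≤ H1norm φ g := L2norm_le_H1norm_fst φ g
  have e1 : L2norm φ / Real.sqrt (2*Real.pi) ≤ H1norm φ g / Real.sqrt (2*Real.pi) :=
    (div_le_div_iff_of_pos_right hsT).2 hNφ
  have e2 : Real.sqrt (2*Real.pi) * L2norm g ≤ Real.sqrt (2*Real.pi) * H1norm φ g :=
    mul_le_mul_of_nonneg_left hNg hsT.le
  calc ‖φ x'‖ ≤ ‖φ y‖ + ‖φ x' - φ y‖ := htri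
    _ ≤ L2norm φ / Real.sqrt (2*Real.pi) + Real.sqrt (2*Real.pi) * L2norm g :=
        add_le_add hy2 hdiff
    _ ≤ H1norm φ g / Real.sqrt (2*Real.pi) + Real.sqrt (2*Real.pi) * H1norm φ g :=
        add_le_add e1 e2
    _ = (1 / Real.sqrt (2*Real.pi) + Real.sqrt (2*Real.pi)) * H1norm φ g := by ring


/-- If `√ρ ∈ H¹(𝕋)`, `∫ρ = 1` and `ρ > 0`, then `v = Δ√ρ/√ρ` is a well-defined
bounded linear functional on `H¹(𝕋)` and `√ρ` is a zero-energy eigenfunction of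
`h(v) = -Δ + v`: `∫ ∇√ρ·∇ψ + v(√ρ ψ) = 0` for all `ψ ∈ H¹(𝕋)`. -/
theorem stmt13 (s ds : ℝ → ℝ) (hs : IsH1R s ds) (hpos : ∀ x, 0 < s x)
    (hnorm : ∫ t, (s t) ^ 2 ∂torusMeasure = 1) :
    (∀ φ gφ gφ', IsH1 φ gφ → IsH1 φ gφ' → KSpot s ds φ gφ = KSpot s ds φ gφ') ∧
    (∃ C : ℝ, ∀ φ gφ, IsH1 φ gφ → ‖KSpot s ds φ gφ‖ ≤ C * H1norm φ gφ) ∧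
    (∀ φ gφ ψ gψ (c : ℂ), IsH1 φ gφ → IsH1 ψ gψ →
      KSpot s ds (fun x => c * φ x + ψ x) (fun x => c * gφ x + gψ x)
        = c * KSpot s ds φ gφ + KSpot s ds ψ gψ) ∧
    (∀ ψ gψ, IsH1 ψ gψ →
      (∫ t, (ds t : ℂ) * gψ t ∂torusMeasure) +
        KSpot s ds (fun x => (s x : ℂ) * ψ x) (fun x => (ds x : ℂ) * ψ x + (s x : ℂ) * gψ x)
        = 0) := by
  have hT : (0:ℝ) < 2 * Real.pi := twopi_pos
  have hsC : IsH1 (fun x => (s x : ℂ)) (fun x => (ds x : ℂ)) := hs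
  have hds2 : MemLp (fun t => ((ds t : ℝ) : ℂ)) 2 torusMeasure := hsC.memL2
  have hscontC : Continuous (fun x => ((s x : ℝ) : ℂ)) := hsC.cont
  have hscont : Continuous s := by
    have he : s = fun x => ((fun x => ((s x : ℝ) : ℂ)) x).re := funext fun x => rfl
    rw [he]
    exact Complex.continuous_re.comp hscontC
  have hsper : Function.Periodic s (2*Real.pi) := fun x => by
    have h1 := hsC.1 x
    simpa using congrArg Complex.re h1
  obtain ⟨y₀, hy₀, hmin⟩ := isCompact_Icc.exists_isMinOn
    (Set.nonempty_Icc.2 hT.le) hscont.continuousOn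
  set c := s y₀ with hcdef
  have hc : 0 < c := hpos y₀
  have hcle : ∀ x, c ≤ s x := by
    intro x
    obtain ⟨x', hx', he⟩ := hsper.exists_mem_Ico₀ hT x
    rw [he]
    exact hmin ⟨hx'.1, hx'.2.le⟩
  set Kc := 1 / Real.sqrt (2*Real.pi) + Real.sqrt (2*Real.pi) with hKdef
  have hKc : 0 ≤ Kc := by positivity
  set Ns := L2norm (fun t => ((ds t:ℝ):ℂ)) with hNsdef
  have hNs0 : 0 ≤ Ns := L2norm_nonneg _
  have hdsInt2 : Integrable (fun t => ‖((ds t:ℝ):ℂ)‖^2) torusMeasure :=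
    (memLp_two_iff_integrable_sq_norm hds2.1).1 hds2
  have hNssq : ∫ t, ‖((ds t:ℝ):ℂ)‖^2 ∂torusMeasure = Ns^2 := by
    rw [hNsdef, L2norm, Real.sq_sqrt (integral_nonneg fun t => sq_nonneg _)]
  have hsCm : AEStronglyMeasurable (fun t => ((s t:ℝ):ℂ)) torusMeasure :=
    hscontC.aestronglyMeasurable
  have hsnorm : ∀ t, c ≤ ‖((s t:ℝ):ℂ)‖ := fun t => by
    rw [Complex.norm_real, Real.norm_of_nonneg (hpos t).le]
    exact hcle t
  have hsne : ∀ t : ℝ, ((s t : ℝ) : ℂ) ≠ 0 := fun t => by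
    exact_mod_cast (hpos t).ne'
  have hsinv : Continuous (fun t => (((s t:ℝ):ℂ))⁻¹) := hscontC.inv₀ hsne
  have hsinv2 : Continuous (fun t => ((((s t:ℝ):ℂ))^2)⁻¹) :=
    (hscontC.pow 2).inv₀ (fun t => pow_ne_zero 2 (hsne t))
  -- main integrability and bound
  have main : ∀ (φ gφ : ℝ → ℂ), IsH1 φ gφ →
      Integrable (fun t => ((ds t:ℝ):ℂ) * (gφ t / ((s t:ℝ):ℂ) - φ t * ((ds t:ℝ):ℂ) / (((s t:ℝ):ℂ))^2)) torusMeasure ∧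
      ‖KSpot s ds φ gφ‖ ≤ (Ns/c + Kc*Ns^2/c^2) * H1norm φ gφ := by
    intro φ gφ hφ
    set M := Kc * H1norm φ gφ with hMdef
    have hH0 : 0 ≤ H1norm φ gφ := Real.sqrt_nonneg _
    have hM0 : 0 ≤ M := mul_nonneg hKc hH0
    have hMle : ∀ x, ‖φ x‖ ≤ M := fun x => hφ.norm_le x
    have hgφ2 : MemLp gφ 2 torusMeasure := hφ.memL2
    have hFb : ∀ t, ‖((ds t:ℝ):ℂ) * (gφ t / ((s t:ℝ):ℂ) - φ t * ((ds t:ℝ):ℂ) / (((s t:ℝ):ℂ))^2)‖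
        ≤ (1/c) * (‖((ds t:ℝ):ℂ)‖ * ‖gφ t‖) + (M/c^2) * ‖((ds t:ℝ):ℂ)‖^2 := by
      intro t
      have hst := hsnorm t
      have h1 : ‖gφ t / ((s t:ℝ):ℂ)‖ ≤ ‖gφ t‖ / c := by
        rw [norm_div]
        exact div_le_div₀ (norm_nonneg _) le_rfl hc hst
      have h2 : ‖φ t * ((ds t:ℝ):ℂ) / (((s t:ℝ):ℂ))^2‖ ≤ M * ‖((ds t:ℝ):ℂ)‖ / c^2 := by
        rw [norm_div, norm_mul, norm_pow]
        exact div_le_div₀ (mul_nonneg hM0 (norm_nonneg _))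
          (mul_le_mul_of_nonneg_right (hMle t) (norm_nonneg _))
          (pow_pos hc 2) (pow_le_pow_left₀ hc.le hst 2)
      calc ‖((ds t:ℝ):ℂ) * (gφ t / ((s t:ℝ):ℂ) - φ t * ((ds t:ℝ):ℂ) / (((s t:ℝ):ℂ))^2)‖
          = ‖((ds t:ℝ):ℂ)‖ * ‖gφ t / ((s t:ℝ):ℂ) - φ t * ((ds t:ℝ):ℂ) / (((s t:ℝ):ℂ))^2‖ :=
            norm_mul _ _
        _ ≤ ‖((ds t:ℝ):ℂ)‖ * (‖gφ t / ((s t:ℝ):ℂ)‖ + ‖φ t * ((ds t:ℝ):ℂ) / (((s t:ℝ):ℂ))^2‖) :=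
            mul_le_mul_of_nonneg_left (norm_sub_le _ _) (norm_nonneg _)
        _ ≤ ‖((ds t:ℝ):ℂ)‖ * (‖gφ t‖/c + M*‖((ds t:ℝ):ℂ)‖/c^2) :=
            mul_le_mul_of_nonneg_left (add_le_add h1 h2) (norm_nonneg _)
        _ = (1/c) * (‖((ds t:ℝ):ℂ)‖ * ‖gφ t‖) + (M/c^2) * ‖((ds t:ℝ):ℂ)‖^2 := by ring
    have hGint : Integrable (fun t => (1/c) * (‖((ds t:ℝ):ℂ)‖ * ‖gφ t‖) + (M/c^2) * ‖((ds t:ℝ):ℂ)‖^2) torusMeasure :=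
      ((integrable_norm_mul hds2 hgφ2).const_mul (1/c)).add (hdsInt2.const_mul (M/c^2))
    have hFm : AEStronglyMeasurable (fun t => ((ds t:ℝ):ℂ) * (gφ t / ((s t:ℝ):ℂ) - φ t * ((ds t:ℝ):ℂ) / (((s t:ℝ):ℂ))^2)) torusMeasure := by
      have h3 : AEStronglyMeasurable (fun t => ((ds t:ℝ):ℂ) * (gφ t * (((s t:ℝ):ℂ))⁻¹ - φ t * ((ds t:ℝ):ℂ) * ((((s t:ℝ):ℂ))^2)⁻¹)) torusMeasure :=
        hds2.1.mul ((hgφ2.1.mul hsinv.aestronglyMeasurable).sub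
          ((hφ.cont.aestronglyMeasurable.mul hds2.1).mul hsinv2.aestronglyMeasurable))
      apply h3.congr
      filter_upwards with t
      rw [div_eq_mul_inv, div_eq_mul_inv]
    have hFint : Integrable (fun t => ((ds t:ℝ):ℂ) * (gφ t / ((s t:ℝ):ℂ) - φ t * ((ds t:ℝ):ℂ) / (((s t:ℝ):ℂ))^2)) torusMeasure :=
      hGint.mono' hFm (Filter.Eventually.of_forall hFb)
    refine ⟨hFint, ?_⟩
    have hcs := cs hds2 hgφ2
    have hNg : L2norm gφ ≤ H1norm φ gφ := L2norm_le_H1norm_snd φ gφ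
    calc ‖KSpot s ds φ gφ‖
        = ‖∫ t, ((ds t:ℝ):ℂ) * (gφ t / ((s t:ℝ):ℂ) - φ t * ((ds t:ℝ):ℂ) / (((s t:ℝ):ℂ))^2) ∂torusMeasure‖ := by
          rw [KSpot, norm_neg]
      _ ≤ ∫ t, ‖((ds t:ℝ):ℂ) * (gφ t / ((s t:ℝ):ℂ) - φ t * ((ds t:ℝ):ℂ) / (((s t:ℝ):ℂ))^2)‖ ∂torusMeasure :=
          norm_integral_le_integral_norm _
      _ ≤ ∫ t, ((1/c) * (‖((ds t:ℝ):ℂ)‖ * ‖gφ t‖) + (M/c^2) * ‖((ds t:ℝ):ℂ)‖^2) ∂torusMeasure :=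
          integral_mono hFint.norm hGint hFb
      _ = (1/c) * (∫ t, ‖((ds t:ℝ):ℂ)‖ * ‖gφ t‖ ∂torusMeasure)
          + (M/c^2) * (∫ t, ‖((ds t:ℝ):ℂ)‖^2 ∂torusMeasure) := by
          rw [integral_add ((integrable_norm_mul hds2 hgφ2).const_mul (1/c))
            (hdsInt2.const_mul (M/c^2)), integral_const_mul, integral_const_mul]
      _ ≤ (1/c) * (Ns * L2norm gφ) + (M/c^2) * Ns^2 := by
          rw [hNssq]
          have h4 := mul_le_mul_of_nonneg_left hcs (by positivity : (0:ℝ) ≤ 1/c)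
          linarith
      _ ≤ (Ns/c + Kc*Ns^2/c^2) * H1norm φ gφ := by
          have h5 : (1/c)*(Ns*L2norm gφ) ≤ (Ns/c) * H1norm φ gφ := by
            calc (1/c)*(Ns*L2norm gφ) = (Ns/c) * L2norm gφ := by ring
              _ ≤ (Ns/c) * H1norm φ gφ := mul_le_mul_of_nonneg_left hNg (by positivity)
          have h6 : (M/c^2) * Ns^2 = (Kc*Ns^2/c^2) * H1norm φ gφ := by
            rw [hMdef]; ring
          linarith
  -- a.e. uniqueness of the weak derivative
  have hae : ∀ (φ g1 g2 : ℝ → ℂ), IsH1 φ g1 → IsH1 φ g2 → g1 =ᵐ[torusMeasure] g2 := by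
    intro φ g1 g2 h1 h2
    have hint : ∀ a b : ℝ, IntervalIntegrable (fun t => g1 t - g2 t) volume a b :=
      fun a b => (h1.g_intervalIntegrable a b).sub (h2.g_intervalIntegrable a b)
    have h0 : ∀ x : ℝ, ∫ t in (0:ℝ)..x, (g1 t - g2 t) = 0 := by
      intro x
      rw [intervalIntegral.integral_sub (h1.g_intervalIntegrable 0 x)
        (h2.g_intervalIntegrable 0 x)]
      have e1 := h1.2.2.2 x
      have e2 := h2.2.2.2 x
      linear_combination e2 - e1
    have hv := ae_zero_of_intervalIntegral_zero hint h0
    have h' : ∀ᵐ x ∂torusMeasure, g1 x - g2 x = 0 := ae_restrict_of_ae hv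
    filter_upwards [h'] with t ht
    exact sub_eq_zero.mp ht
  refine ⟨?_, ?_, ?_, ?_⟩
  · intro φ gφ gφ' h1 h2
    have hgg := hae φ gφ gφ' h1 h2
    rw [KSpot, KSpot]
    congr 1
    apply integral_congr_ae
    filter_upwards [hgg] with t ht
    rw [ht]
  · exact ⟨Ns/c + Kc*Ns^2/c^2, fun φ gφ hφ => (main φ gφ hφ).2⟩
  · intro φ gφ ψ gψ cc hφ hψ
    have hiφ := (main φ gφ hφ).1
    have hiψ := (main ψ gψ hψ).1
    have h1 : cc * KSpot s ds φ gφ + KSpot s ds ψ gψ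
        = -∫ t, (cc * (((ds t:ℝ):ℂ) * (gφ t / ((s t:ℝ):ℂ) - φ t * ((ds t:ℝ):ℂ) / (((s t:ℝ):ℂ))^2))
            + ((ds t:ℝ):ℂ) * (gψ t / ((s t:ℝ):ℂ) - ψ t * ((ds t:ℝ):ℂ) / (((s t:ℝ):ℂ))^2)) ∂torusMeasure := by
      rw [KSpot, KSpot, integral_add (hiφ.const_mul cc) hiψ, integral_const_mul]
      ring
    rw [h1, KSpot]
    congr 1
    apply integral_congr_ae
    filter_upwards with t
    ring
  · intro ψ gψ hψ
    have h1 : KSpot s ds (fun x => (s x : ℂ) * ψ x) (fun x => (ds x : ℂ) * ψ x + (s x : ℂ) * gψ x)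
        = -∫ t, (ds t : ℂ) * gψ t ∂torusMeasure := by
      rw [KSpot]
      congr 1
      apply integral_congr_ae
      filter_upwards with t
      have h2 := hsne t
      field_simp
      ring
    rw [h1]
    ring

end
end

section
/- Single-particle Hohenberg–Kohn: suppose φ ∈ H¹(𝕋) satisfies φ(x) > 0 for all x ∈ 𝕋, and v, v' ∈ H⁻¹(𝕋) satisfy ∫_𝕋 ∇φ·∇ψ + v(φψ) = 0 and ∫_𝕋 ∇φ·∇ψ + v'(φψ) = 0 for all ψ ∈ H¹(𝕋). Then v = v' as elements of H⁻¹(𝕋). -/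
open MeasureTheory Set Filter ComplexConjugate

noncomputable section

/-! Multiplication by a nowhere-vanishing `φ ∈ H¹(𝕋)` maps `H¹(𝕋)` onto itself: for `ψ ∈ H¹(𝕋)`
the quotient `ψ / φ` is again absolutely continuous, its a.e. derivative `(ψ' φ - ψ φ') / φ²`
is in `L²` because `φ` is bounded away from `0` and `ψ` is bounded, so `ψ / φ ∈ H¹(𝕋)`.
Testing both eigenvalue equations against `ψ / φ` and subtracting gives `v ψ = v' ψ`. -/

namespace AbsolutelyContinuousOnInterval

theorem of_dist_le_mul {X Y : Type*} [PseudoMetricSpace X] [PseudoMetricSpace Y]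
    {f : ℝ → X} {g : ℝ → Y} {a b K : ℝ} (hg : AbsolutelyContinuousOnInterval g a b)
    (hfg : ∀ x ∈ uIcc a b, ∀ y ∈ uIcc a b, dist (f x) (f y) ≤ K * dist (g x) (g y)) :
    AbsolutelyContinuousOnInterval f a b := by
  have hK := Tendsto.const_mul K hg
  rw [mul_zero] at hK
  refine squeeze_zero' (.of_forall fun _ ↦ Finset.sum_nonneg fun _ _ ↦ dist_nonneg) ?_ hK
  rw [eventually_inf_principal]
  filter_upwards with E hE
  rw [Finset.mul_sum]
  exact Finset.sum_le_sum fun i hi ↦ hfg _ (hE.1 i hi).1 _ (hE.1 i hi).2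

theorem inv {𝕜 : Type*} [NormedField 𝕜] {f : ℝ → 𝕜} {a b : ℝ}
    (hf : AbsolutelyContinuousOnInterval f a b) (hf0 : ∀ x ∈ uIcc a b, f x ≠ 0) :
    AbsolutelyContinuousOnInterval f⁻¹ a b := by
  obtain ⟨t₀, ht₀, hmin⟩ := isCompact_uIcc.exists_isMinOn nonempty_uIcc
    hf.continuousOn.norm
  have hm : 0 < ‖f t₀‖ := norm_pos_iff.mpr (hf0 t₀ ht₀)
  refine hf.of_dist_le_mul (K := (‖f t₀‖ ^ 2)⁻¹) fun x hx y hy ↦ ?_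
  rw [Pi.inv_apply, Pi.inv_apply, dist_inv_inv₀ (hf0 x hx) (hf0 y hy), div_eq_inv_mul, sq]
  gcongr
  exacts [hmin hx, hmin hy]

end AbsolutelyContinuousOnInterval

section Primitive

variable {E : Type*} [NormedAddCommGroup E] [NormedSpace ℝ E]

theorem IntervalIntegrable.absolutelyContinuousOnInterval_primitive {f : ℝ → E} {a b c : ℝ}
    (hf : IntervalIntegrable f volume a b) (hc : c ∈ uIcc a b) :
    AbsolutelyContinuousOnInterval (fun x ↦ ∫ t in c..x, f t) a b := by
  refine (hf.norm.absolutelyContinuousOnInterval_intervalIntegral hc).of_dist_le_mul (K := 1)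
    fun x hx y hy ↦ ?_
  have hcx := hf.mono_set (uIcc_subset_uIcc hc hx)
  have hcy := hf.mono_set (uIcc_subset_uIcc hc hy)
  rw [one_mul, dist_eq_norm, dist_eq_norm, Real.norm_eq_abs,
    intervalIntegral.integral_interval_sub_left hcx hcy,
    intervalIntegral.integral_interval_sub_left hcx.norm hcy.norm]
  exact intervalIntegral.norm_integral_le_abs_integral_norm

theorem AbsolutelyContinuousOnInterval.integral_eq_sub_of_ae_hasDerivAt [CompleteSpace E]
    {F f : ℝ → E} {a b : ℝ} (hF : AbsolutelyContinuousOnInterval F a b)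
    (hf : IntervalIntegrable f volume a b)
    (hderiv : ∀ᵐ t, t ∈ uIcc a b → HasDerivAt F (f t) t) :
    ∫ t in a..b, f t = F b - F a := by
  have hG := hF.sub (hf.absolutelyContinuousOnInterval_primitive left_mem_uIcc)
  obtain ⟨C, hC⟩ := hG.const_of_ae_hasDerivAt_zero <| by
    filter_upwards [hderiv, hf.ae_hasDerivAt_integral] with t hFt hft ht
    simpa using (hFt ht).sub (hft ht a left_mem_uIcc)
  have ha := hC a left_mem_uIcc
  have hb := hC b right_mem_uIcc
  simp only [Pi.sub_apply, intervalIntegral.integral_same, sub_zero] at ha hb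
  rw [← ha] at hb
  linear_combination (norm := module) -hb

def IsPrimitive (u a : ℝ → E) : Prop :=
  (∀ p q : ℝ, IntervalIntegrable a volume p q) ∧ ∀ x, u x = u 0 + ∫ t in (0 : ℝ)..x, a t

namespace IsPrimitive

variable {u a : ℝ → E}

theorem eq_const_add (h : IsPrimitive u a) : u = fun x ↦ u 0 + ∫ t in (0 : ℝ)..x, a t :=
  funext h.2

theorem continuous (h : IsPrimitive u a) : Continuous u := by
  rw [h.eq_const_add]
  exact continuous_const.add (intervalIntegral.continuous_primitive h.1 0)

theorem absolutelyContinuousOnInterval (h : IsPrimitive u a) (x : ℝ) :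
    AbsolutelyContinuousOnInterval u 0 x := by
  refine ((h.1 0 x).absolutelyContinuousOnInterval_primitive left_mem_uIcc).of_dist_le_mul
    (K := 1) fun y _ z _ ↦ ?_
  rw [one_mul, h.2 y, h.2 z, dist_add_left]

theorem ae_hasDerivAt [CompleteSpace E] (h : IsPrimitive u a) (x : ℝ) :
    ∀ᵐ t, t ∈ uIcc 0 x → HasDerivAt u (a t) t := by
  filter_upwards [(h.1 0 x).ae_hasDerivAt_integral] with t ht hmem
  rw [h.eq_const_add]
  exact (ht hmem 0 left_mem_uIcc).const_add _

theorem of_ae_hasDerivAt [CompleteSpace E] (ha : ∀ p q : ℝ, IntervalIntegrable a volume p q)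
    (hu : ∀ x, AbsolutelyContinuousOnInterval u 0 x)
    (hderiv : ∀ x, ∀ᵐ t, t ∈ uIcc 0 x → HasDerivAt u (a t) t) : IsPrimitive u a :=
  ⟨ha, fun x ↦ by rw [(hu x).integral_eq_sub_of_ae_hasDerivAt (ha 0 x) (hderiv x)]; abel⟩

theorem div {𝕜 : Type*} [RCLike 𝕜] {u a w b : ℝ → 𝕜} (hu : IsPrimitive u a)
    (hw : IsPrimitive w b) (hw0 : ∀ x, w x ≠ 0) :
    IsPrimitive (u / w) ((a * w - u * b) / w ^ 2) := by
  have hcont : Continuous fun t ↦ (w t ^ 2)⁻¹ := (hw.continuous.pow 2).inv₀ (by simp [hw0])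
  refine of_ae_hasDerivAt (fun p q ↦ ?_) (fun x ↦ ?_) (fun x ↦ ?_)
  · show IntervalIntegrable (fun t ↦ (a t * w t - u t * b t) / w t ^ 2) volume p q
    have h1 := ((hu.1 p q).mul_continuousOn hw.continuous.continuousOn).sub
      ((hw.1 p q).continuousOn_mul hu.continuous.continuousOn)
    simpa only [div_eq_mul_inv] using h1.mul_continuousOn hcont.continuousOn
  · rw [div_eq_mul_inv]
    exact (hu.absolutelyContinuousOnInterval x).smul
      ((hw.absolutelyContinuousOnInterval x).inv fun t _ ↦ hw0 t)
  · filter_upwards [hu.ae_hasDerivAt x, hw.ae_hasDerivAt x] with t hut hwt ht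
    exact (hut ht).div (hwt ht) (hw0 t)

end IsPrimitive

end Primitive

instance inst_s14 : IsFiniteMeasure torusMeasure :=
  ⟨by rw [torusMeasure, Measure.restrict_apply_univ]; exact measure_Ioc_lt_top⟩

theorem Continuous.memLp_top_torusMeasure {F : Type*} [NormedAddCommGroup F] {c : ℝ → F}
    (hc : Continuous c) : MemLp c ⊤ torusMeasure := by
  obtain ⟨C, hC⟩ := isCompact_Icc.exists_bound_of_continuousOn
    (s := Icc 0 (2 * Real.pi)) hc.continuousOn
  refine memLp_top_of_bound hc.aestronglyMeasurable C ?_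
  exact (ae_restrict_iff' measurableSet_Ioc).mpr
    (.of_forall fun x hx ↦ hC x (Ioc_subset_Icc_self hx))

namespace IsH1

variable {φ dφ ψ gψ : ℝ → ℂ}

theorem isPrimitive (h : IsH1 φ dφ) : IsPrimitive φ dφ := by
  have hperiod : IntervalIntegrable dφ volume 0 (2 * Real.pi) :=
    (intervalIntegrable_iff_integrableOn_Ioc_of_le Real.two_pi_pos.le).mpr
      (h.2.2.1.integrable one_le_two)
  exact ⟨h.2.1.intervalIntegrable₀ Real.two_pi_pos.ne' hperiod, h.2.2.2⟩

theorem div (hψ : IsH1 ψ gψ) (hφ : IsH1 φ dφ) (hφ0 : ∀ x, φ x ≠ 0) :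
    IsH1 (ψ / φ) ((gψ * φ - ψ * dφ) / φ ^ 2) := by
  have hφcont := hφ.isPrimitive.continuous
  have hmem : MemLp (fun x ↦ (φ x)⁻¹ * gψ x - (ψ x / φ x ^ 2) * dφ x) 2 torusMeasure :=
    (hψ.2.2.1.mul' (hφcont.inv₀ hφ0).memLp_top_torusMeasure).sub
      (hφ.2.2.1.mul' ((hψ.isPrimitive.continuous.div (hφcont.pow 2)
        fun x ↦ pow_ne_zero 2 (hφ0 x)).memLp_top_torusMeasure))
  refine ⟨hψ.1.div hφ.1, fun x ↦ ?_, ?_, (hψ.isPrimitive.div hφ.isPrimitive hφ0).2⟩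
  · simp only [Pi.div_apply, Pi.sub_apply, Pi.mul_apply, Pi.pow_apply, hψ.1 x, hφ.1 x,
      hψ.2.1 x, hφ.2.1 x]
  · convert hmem using 1
    funext x
    simp only [Pi.div_apply, Pi.sub_apply, Pi.mul_apply, Pi.pow_apply]
    field_simp [hφ0 x]

end IsH1

/-- Single-particle Hohenberg–Kohn theorem: if a strictly positive `φ ∈ H¹(𝕋)` is a
zero-energy eigenfunction of both `h(v)` and `h(v')`, then `v = v'` in `H⁻¹(𝕋)`. -/
theorem stmt14 (φ dφ : ℝ → ℝ) (hφ : IsH1R φ dφ) (hpos : ∀ x, 0 < φ x)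
    (v v' : Hneg1)
    (hv : ∀ ψ gψ, IsH1 ψ gψ →
      (∫ t, (dφ t : ℂ) * gψ t ∂torusMeasure) + v.toFun (fun x => (φ x : ℂ) * ψ x) = 0)
    (hv' : ∀ ψ gψ, IsH1 ψ gψ →
      (∫ t, (dφ t : ℂ) * gψ t ∂torusMeasure) + v'.toFun (fun x => (φ x : ℂ) * ψ x) = 0) :
    ∀ ψ gψ, IsH1 ψ gψ → v.toFun ψ = v'.toFun ψ := by
  intro ψ gψ hψ
  have hφ0 : ∀ x, (φ x : ℂ) ≠ 0 := fun x ↦ Complex.ofReal_ne_zero.mpr (hpos x).ne'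
  have hquot := hψ.div hφ hφ0
  have hmul : (fun x ↦ (φ x : ℂ) * (ψ / fun x ↦ (φ x : ℂ)) x) = ψ :=
    funext fun x ↦ mul_div_cancel₀ (ψ x) (hφ0 x)
  have h := hv _ _ hquot
  have h' := hv' _ _ hquot
  rw [hmul] at h h'
  linear_combination h - h'

end
end
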